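/- arXiv:1907.02120 — 4 statements merged into one kernel-verified Lean document; each statement's English description precedes it below -/
import Mathlib

section
/- Let G = (V, E) be a graph and U ⊂ V nonempty with |δ(U)| = 3. Let F_U be a tour of G^U (the graph obtained by contracting V∖U to a pseudovertex) and F_{V∖U} a tour of G^{V∖U} such that χ^{F_U}_e = χ^{F_{V∖U}}_e for every e ∈ δ(U), and assume that F_U minus the edges incident on the pseudovertex induces a connected multigraph on U. Then the multiset F defined by χ^F_e = χ^{F_U}_e for e ∈ E(G^U) and χ^F_e = χ^{F_{V∖U}}_e for e ∈ E(G^{V∖U}) is a tour of G. -/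
open scoped Classical

noncomputable section

namespace TSPPaper

variable {V : Type*} [Fintype V] [DecidableEq V]

/-- The sum of `x` over the edges crossing the cut `U` (each crossing edge counted once). -/
def cutSum (x : Sym2 V → ℝ) (U : Finset V) : ℝ :=
  ∑ u ∈ U, ∑ v ∈ Uᶜ, x s(u, v)

/-- Membership in the subtour elimination polytope `SUBT(K_n)`. -/
def inSUBT (x : Sym2 V → ℝ) : Prop :=
  (∀ e : Sym2 V, e.IsDiag → x e = 0) ∧
  (∀ e : Sym2 V, 0 ≤ x e) ∧ (∀ e : Sym2 V, x e ≤ 1) ∧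
  (∀ v : V, cutSum x {v} = 2) ∧
  (∀ U : Finset V, U.Nonempty → U ≠ Finset.univ → 2 ≤ cutSum x U)

/-- The simple graph underlying the support of a multigraph given by edge multiplicities. -/
def supportGraph (F : Sym2 V → ℕ) : SimpleGraph V where
  Adj u v := u ≠ v ∧ 0 < F s(u, v)
  symm := ⟨fun u v h => ⟨h.1.symm, by rw [Sym2.eq_swap]; exact h.2⟩⟩
  loopless := ⟨fun u h => h.1 rfl⟩

/-- The support graph of a real edge vector. -/
def suppGraph (x : Sym2 V → ℝ) : SimpleGraph V where
  Adj u v := u ≠ v ∧ 0 < x s(u, v)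
  symm := ⟨fun u v h => ⟨h.1.symm, by rw [Sym2.eq_swap]; exact h.2⟩⟩
  loopless := ⟨fun u h => h.1 rfl⟩

/-- Degree of a vertex in a multigraph given by edge multiplicities. -/
def multiDeg (F : Sym2 V → ℕ) (v : V) : ℕ := ∑ u : V, F s(v, u)

/-- A tour: a spanning connected Eulerian multigraph (with no loops). -/
def IsTour (F : Sym2 V → ℕ) : Prop :=
  (∀ e : Sym2 V, e.IsDiag → F e = 0) ∧
  (∀ v : V, Even (multiDeg F v)) ∧
  (supportGraph F).Connected

/-- A tour using only edges in the support of `x`. -/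
def IsTourSupp (x : Sym2 V → ℝ) (F : Sym2 V → ℕ) : Prop :=
  IsTour F ∧ ∀ e : Sym2 V, F e ≠ 0 → 0 < x e

/-- A tour of a (simple) graph `G`. -/
def IsTourOfGraph (G : SimpleGraph V) (F : Sym2 V → ℕ) : Prop :=
  IsTour F ∧ ∀ e : Sym2 V, F e ≠ 0 → e ∈ G.edgeSet

/-- Membership in `TSP(K_n)`: the convex hull of incidence vectors of tours. -/
def inTSP (y : Sym2 V → ℝ) : Prop :=
  ∃ (k : ℕ) (F : Fin k → Sym2 V → ℕ) (lam : Fin k → ℝ),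
    (∀ i, IsTour (F i)) ∧ (∀ i, 0 ≤ lam i) ∧ (∑ i, lam i = 1) ∧
    (∀ e : Sym2 V, y e = ∑ i, lam i * (F i e : ℝ))

/-- number of support edges incident on a vertex -/
def suppDeg (x : Sym2 V → ℝ) (v : V) : ℕ :=
  (Finset.univ.filter fun e : Sym2 V => 0 < x e ∧ v ∈ e).card

/-- A θ-cyclic point. -/
def IsCyclic (θ : ℝ) (x : Sym2 V → ℝ) : Prop :=
  0 < θ ∧ θ ≤ 1 / 2 ∧ inSUBT x ∧
  (∀ e : Sym2 V, x e = 0 ∨ x e = θ ∨ x e = 1 - θ ∨ x e = 1) ∧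
  (∀ v : V, suppDeg x v ≤ 3) ∧
  (∀ v : V, ∃ e : Sym2 V, v ∈ e ∧ x e = 1)

/-- The edges of the complete graph crossing the cut `U`. -/
def crossEdges (U : Finset V) : Finset (Sym2 V) :=
  Finset.univ.filter fun e : Sym2 V => ∃ u v : V, e = s(u, v) ∧ u ∈ U ∧ v ∉ U

/-- The support edges of `x` crossing the cut `U`. -/
def cutEdges (x : Sym2 V → ℝ) (U : Finset V) : Finset (Sym2 V) :=
  (crossEdges U).filter fun e => 0 < x e

/-- The edges of the graph `G` crossing the cut `U`. -/
def cutEdgesG (G : SimpleGraph V) (U : Finset V) : Finset (Sym2 V) :=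
  (crossEdges U).filter fun e => e ∈ G.edgeSet

/-- A critical cut of the support graph of `x`. -/
def IsCriticalCut (x : Sym2 V → ℝ) (U : Finset V) : Prop :=
  2 ≤ U.card ∧ 2 ≤ Uᶜ.card ∧
  (cutEdges x U).card = 3 ∧
  ((cutEdges x U).filter fun e => x e = 1).card = 1 ∧
  ∀ e ∈ cutEdges x U, ∀ f ∈ cutEdges x U, e ≠ f → ∀ w : V, w ∈ e → w ∈ f → False

/-- Vertex set after contracting the complement of `U` to a single pseudovertex `none`. -/
abbrev Contracted (U : Finset V) := Option {u : V // u ∈ U}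

/-- The contraction map sending every vertex outside of `U` to the pseudovertex. -/
def contractMap (U : Finset V) (w : V) : Contracted U :=
  if h : w ∈ U then some ⟨w, h⟩ else none

/-- The point induced on the contracted vertex set (loops are removed). -/
def contractPoint (x : Sym2 V → ℝ) (U : Finset V) : Sym2 (Contracted U) → ℝ :=
  fun d => if d.IsDiag then 0
    else ∑ e ∈ Finset.univ.filter (fun e : Sym2 V => Sym2.map (contractMap U) e = d), x e

/-- The eight allowed patterns, as multiplicity triples on `(e_u, f_u, g_u)`. -/
def patternOK (a b c : ℕ) : Prop :=
  (a, b, c) = (2, 0, 0) ∨ (a, b, c) = (1, 1, 0) ∨ (a, b, c) = (1, 0, 1) ∨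
  (a, b, c) = (2, 2, 0) ∨ (a, b, c) = (2, 0, 2) ∨ (a, b, c) = (2, 1, 1) ∨
  (a, b, c) = (1, 2, 1) ∨ (a, b, c) = (1, 1, 2)

/-- A handpicked tour (of the support of a cyclic point `x`): around every vertex `u` the
multiset of edges of the tour incident on `u` is one of the allowed patterns on the
1-edge and the two fractional edges at `u`. -/
def Handpicked (x : Sym2 V → ℝ) (F : Sym2 V → ℕ) : Prop :=
  ∀ u : V, ∃ e f g : Sym2 V,
    u ∈ e ∧ u ∈ f ∧ u ∈ g ∧ e ≠ f ∧ e ≠ g ∧ f ≠ g ∧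
    x e = 1 ∧ 0 < x f ∧ x f < 1 ∧ 0 < x g ∧ x g < 1 ∧
    (∀ e' : Sym2 V, 0 < x e' → u ∈ e' → e' = e ∨ e' = f ∨ e' = g) ∧
    patternOK (F e) (F f) (F g)

/-- `φ₂(e)`: total weight of the members of the combination in which `e` is doubled. -/
def phi2 {k : ℕ} (lam : Fin k → ℝ) (F : Fin k → Sym2 V → ℕ) (e : Sym2 V) : ℝ :=
  ∑ i ∈ Finset.univ.filter (fun i : Fin k => F i e = 2), lam i

/-- Frequency of the pattern whose multiplicities on the edges `(e, f, g)` are given by `p`. -/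
def patFreq {k : ℕ} (lam : Fin k → ℝ) (F : Fin k → Sym2 V → ℕ)
    (e f g : Sym2 V) (p : ℕ × ℕ × ℕ) : ℝ :=
  ∑ i ∈ Finset.univ.filter (fun i : Fin k => (F i e, F i f, F i g) = p), lam i

/-- The simple graph given by a finite set of edges. -/
def graphOfEdges (T : Finset (Sym2 V)) : SimpleGraph V where
  Adj u v := u ≠ v ∧ s(u, v) ∈ T
  symm := ⟨fun u v h => ⟨h.1.symm, by rw [Sym2.eq_swap]; exact h.2⟩⟩
  loopless := ⟨fun u h => h.1 rfl⟩

/-- Degree of a vertex in an edge set. -/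
def edgeDeg (T : Finset (Sym2 V)) (v : V) : ℕ := (T.filter fun e => v ∈ e).card

/-- A connector of the support graph of `x`: a connected spanning subgraph, no doubled edges. -/
def IsConnector (x : Sym2 V → ℝ) (T : Finset (Sym2 V)) : Prop :=
  (∀ e ∈ T, 0 < x e) ∧ (graphOfEdges T).Connected

/-- `M` is an induced matching of the support graph of `x` consisting of 1-edges. -/
def IsInducedMatching (x : Sym2 V → ℝ) (M : Finset (Sym2 V)) : Prop :=
  (∀ e ∈ M, x e = 1) ∧
  (∀ e ∈ M, ∀ f ∈ M, e ≠ f → ∀ w : V, w ∈ e → w ∈ f → False) ∧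
  (∀ e : Sym2 V, 0 < x e → (∀ w : V, w ∈ e → ∃ f ∈ M, w ∈ f) → e ∈ M)

/-- Property `P(v, M, Λ)` for a convex combination `{lam, T}` of connectors. -/
def PropertyP (x : Sym2 V → ℝ) (v : V) (M : Finset (Sym2 V)) (L : ℝ)
    {k : ℕ} (lam : Fin k → ℝ) (T : Fin k → Finset (Sym2 V)) : Prop :=
  (∑ i ∈ Finset.univ.filter (fun i : Fin k => edgeDeg (T i) v = 1), lam i) = L ∧
  (∑ i ∈ Finset.univ.filter (fun i : Fin k => edgeDeg (T i) v = 3), lam i) = L ∧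
  (∑ i ∈ Finset.univ.filter (fun i : Fin k => edgeDeg (T i) v = 2), lam i) = 1 - 2 * L ∧
  (∀ e ∈ M, ∀ w : V, w ∈ e → ∀ i, edgeDeg (T i) w = 2) ∧
  (∀ i, ((graphOfEdges (T i)).induce {u : V | u ≠ v}).Connected)

/-- An `O`-join of the support graph of `x`. -/
def IsOJoin (x : Sym2 V → ℝ) (O : Finset V) (J : Finset (Sym2 V)) : Prop :=
  (∀ e ∈ J, 0 < x e) ∧ ∀ v : V, (Odd (edgeDeg J v) ↔ v ∈ O)

/-- An `O`-join of the graph `G`. -/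
def IsOJoinOfGraph (G : SimpleGraph V) (O : Finset V) (J : Finset (Sym2 V)) : Prop :=
  (∀ e ∈ J, e ∈ G.edgeSet) ∧ ∀ v : V, (Odd (edgeDeg J v) ↔ v ∈ O)

/-- The support graph, after contracting the complement of `U`, of a multigraph on `V`
whose edges all have an endpoint in `U`. -/
def quotGraph (U : Finset V) (F : Sym2 V → ℕ) : SimpleGraph (Contracted U) where
  Adj a b := a ≠ b ∧ ∃ u v : V, 0 < F s(u, v) ∧ contractMap U u = a ∧ contractMap U v = b
  symm := ⟨fun a b h => ⟨h.1.symm, by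
    obtain ⟨u, v, h1, h2, h3⟩ := h.2
    exact ⟨v, u, by rw [Sym2.eq_swap]; exact h1, h3, h2⟩⟩⟩
  loopless := ⟨fun a h => h.1 rfl⟩

/-- A tour of the graph `G^U` obtained from `G` by contracting the complement of `U`,
encoded by the multiplicities of the surviving edges of `G` (those with an endpoint in `U`). -/
def IsTourOfContraction (G : SimpleGraph V) (U : Finset V) (F : Sym2 V → ℕ) : Prop :=
  (∀ e : Sym2 V, F e ≠ 0 → e ∈ G.edgeSet ∧ ∃ w, w ∈ e ∧ w ∈ U) ∧
  (∀ u ∈ U, Even (multiDeg F u)) ∧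
  Even (∑ u ∈ U, ∑ w ∈ Uᶜ, F s(u, w)) ∧
  (quotGraph U F).Connected

/-- The number of critical cuts of the support graph of `x`. -/
def criticalCutCount (x : Sym2 V → ℝ) : ℕ :=
  Set.ncard {U : Finset V | IsCriticalCut x U}

/-! Every vertex of `U` is joined to a fixed `u₀ ∈ U` inside `F_U` restricted to `U`, which is part
of `F`. A walk of `F_{V∖U}` in `G^{V∖U}` lifts to `F` once each visit of the pseudovertex is
replaced by a detour through `u₀`, so every vertex outside `U` also reaches `u₀`. Degrees and
edges are local, hence inherited from whichever of the two tours covers the vertex. -/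

end TSPPaper

theorem SimpleGraph.Reachable.of_adj_imp_reachable {α β : Type*} {G : SimpleGraph α}
    {H : SimpleGraph β} (f : α → β) (h : ∀ a b, G.Adj a b → H.Reachable (f a) (f b))
    {a b : α} (hab : G.Reachable a b) : H.Reachable (f a) (f b) := by
  rw [SimpleGraph.reachable_iff_reflTransGen] at hab ⊢
  exact hab.lift' f fun a b hadj => (SimpleGraph.reachable_iff_reflTransGen _ _).1 (h a b hadj)

namespace TSPPaper

variable {V : Type*}

lemma contractMap_of_mem [DecidableEq V] {U : Finset V} {u : V} (hu : u ∈ U) :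
    contractMap U u = some ⟨u, hu⟩ :=
  dif_pos hu

lemma contractMap_of_notMem [DecidableEq V] {U : Finset V} {u : V} (hu : u ∉ U) :
    contractMap U u = none :=
  dif_neg hu

lemma multiDeg_congr [Fintype V] {F F' : Sym2 V → ℕ} {v : V} (h : ∀ u, F s(v, u) = F' s(v, u)) :
    multiDeg F v = multiDeg F' v :=
  Finset.sum_congr rfl fun u _ => h u

def uncontract [DecidableEq V] (W : Finset V) (r : V) (a : Contracted W) : V :=
  a.elim r Subtype.val

lemma supportGraph_reachable_uncontract_of_adj [DecidableEq V] {W : Finset V}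
    {F FW : Sym2 V → ℕ} {r : V}
    (hF : ∀ e : Sym2 V, (∃ w, w ∈ e ∧ w ∈ W) → F e = FW e)
    (hr : ∀ v ∉ W, (supportGraph F).Reachable v r) {a b : Contracted W}
    (hab : (quotGraph W FW).Adj a b) :
    (supportGraph F).Reachable (uncontract W r a) (uncontract W r b) := by
  obtain ⟨hne, u₁, u₂, hpos, rfl, rfl⟩ := hab
  have to_uncontract : ∀ u, (supportGraph F).Reachable u (uncontract W r (contractMap W u)) := by
    intro u
    by_cases hu : u ∈ W
    · simp only [contractMap_of_mem hu, uncontract, Option.elim_some, SimpleGraph.Reachable.refl]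
    · simpa only [contractMap_of_notMem hu, uncontract, Option.elim_none] using hr u hu
  -- Two vertices outside `W` would both be contracted to the pseudovertex.
  have hmeet : u₁ ∈ W ∨ u₂ ∈ W := by
    by_contra! h
    exact hne (by rw [contractMap_of_notMem h.1, contractMap_of_notMem h.2])
  have hadj : (supportGraph F).Adj u₁ u₂ := by
    refine ⟨fun h => hne (congrArg _ h), ?_⟩
    rcases hmeet with h | h
    · rwa [hF _ ⟨u₁, Sym2.mem_mk_left _ _, h⟩]
    · rwa [hF _ ⟨u₂, Sym2.mem_mk_right _ _, h⟩]
  exact (to_uncontract u₁).symm.trans (hadj.reachable.trans (to_uncontract u₂))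

lemma supportGraph_connected_of_glue [Fintype V] [DecidableEq V] {U : Finset V}
    {FU FW F : Sym2 V → ℕ}
    (hFW : (quotGraph Uᶜ FW).Connected)
    (hconn : ((supportGraph FU).induce {u : V | u ∈ U}).Connected)
    (hF1 : ∀ e : Sym2 V, (∃ w, w ∈ e ∧ w ∈ U) → F e = FU e)
    (hF2 : ∀ e : Sym2 V, (∃ w, w ∈ e ∧ w ∉ U) → F e = FW e) :
    (supportGraph F).Connected := by
  obtain ⟨⟨u₀, hu₀⟩⟩ := hconn.nonempty
  have reach_inside : ∀ u ∈ U, (supportGraph F).Reachable u u₀ := by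
    intro u hu
    refine SimpleGraph.Reachable.of_adj_imp_reachable Subtype.val (fun a b hab => ?_)
      (hconn.preconnected ⟨u, hu⟩ ⟨u₀, hu₀⟩)
    obtain ⟨hne, hpos⟩ := hab
    exact SimpleGraph.Adj.reachable ⟨hne, by rwa [hF1 _ ⟨a, Sym2.mem_mk_left _ _, a.2⟩]⟩
  have reach : ∀ v, (supportGraph F).Reachable v u₀ := by
    intro v
    by_cases hv : v ∈ U
    · exact reach_inside v hv
    · exact SimpleGraph.Reachable.of_adj_imp_reachable (uncontract Uᶜ u₀)
        (fun a b hab => supportGraph_reachable_uncontract_of_adj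
          (fun e ⟨w, hwe, hw⟩ => hF2 e ⟨w, hwe, Finset.mem_compl.1 hw⟩)
          (fun v hv => reach_inside v (by simpa using hv)) hab)
        (hFW.preconnected (some ⟨v, Finset.mem_compl.2 hv⟩) none)
  have : Nonempty V := ⟨u₀⟩
  exact ⟨fun a b => (reach a).trans (reach b).symm⟩

theorem statement8_general {V : Type*} [Fintype V] [DecidableEq V]
    (G : SimpleGraph V) (U : Finset V)
    (FU FW : Sym2 V → ℕ)
    (hFU : IsTourOfContraction G U FU)
    (hFW : IsTourOfContraction G Uᶜ FW)
    (hconn : ((supportGraph FU).induce {u : V | u ∈ U}).Connected)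
    (F : Sym2 V → ℕ)
    (hF1 : ∀ e : Sym2 V, (∃ w, w ∈ e ∧ w ∈ U) → F e = FU e)
    (hF2 : ∀ e : Sym2 V, (∃ w, w ∈ e ∧ w ∉ U) → F e = FW e) :
    IsTourOfGraph G F := by
  have hedge : ∀ e : Sym2 V, F e ≠ 0 → e ∈ G.edgeSet := by
    intro e he
    induction e using Sym2.ind with
    | _ u v =>
      by_cases hu : u ∈ U
      · rw [hF1 _ ⟨u, Sym2.mem_mk_left u v, hu⟩] at he
        exact (hFU.1 _ he).1
      · rw [hF2 _ ⟨u, Sym2.mem_mk_left u v, hu⟩] at he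
        exact (hFW.1 _ he).1
  have hdeg : ∀ v : V, Even (multiDeg F v) := by
    intro v
    by_cases hv : v ∈ U
    · rw [multiDeg_congr fun u => hF1 _ ⟨v, Sym2.mem_mk_left v u, hv⟩]
      exact hFU.2.1 v hv
    · rw [multiDeg_congr fun u => hF2 _ ⟨v, Sym2.mem_mk_left v u, hv⟩]
      exact hFW.2.1 v (Finset.mem_compl.2 hv)
  refine ⟨⟨fun e he => ?_, hdeg, supportGraph_connected_of_glue hFW.2.2.2 hconn hF1 hF2⟩, hedge⟩
  by_contra h
  exact G.not_isDiag_of_mem_edgeSet (hedge e h) he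

/-- Claim `gluenow2`. Gluing a tour of `G^U` with a tour of `G^{V∖U}` that agree
on the three cut edges, provided the first one stays connected on `U` after deleting the edges at
the pseudovertex, yields a tour of `G`. -/
theorem statement8 {V : Type*} [Fintype V] [DecidableEq V]
    (G : SimpleGraph V) (U : Finset V) (hU : U.Nonempty) (hU' : U ≠ Finset.univ)
    (h3 : (cutEdgesG G U).card = 3)
    (FU FW : Sym2 V → ℕ)
    (hFU : IsTourOfContraction G U FU)
    (hFW : IsTourOfContraction G Uᶜ FW)
    (hagree : ∀ e ∈ cutEdgesG G U, FU e = FW e)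
    (hconn : ((supportGraph FU).induce {u : V | u ∈ U}).Connected)
    (F : Sym2 V → ℕ)
    (hF1 : ∀ e : Sym2 V, (∃ w, w ∈ e ∧ w ∈ U) → F e = FU e)
    (hF2 : ∀ e : Sym2 V, (∃ w, w ∈ e ∧ w ∉ U) → F e = FW e) :
    IsTourOfGraph G F :=
  statement8_general G U FU FW hFU hFW hconn F hF1 hF2

end TSPPaper
end
end

section
/- Let x be a θ-cyclic point with cubic support graph G_x and let U ⊂ V_n be a critical cut of G_x. Suppose x^U can be written as a convex combination {φ^U, 𝓕^U} of handpicked tours of G_x^U, and x^{Ū} as a convex combination {φ^{Ū}, 𝓕^{Ū}} of handpicked tours of G_x^{Ū} (Ū = V_n∖U), such that (i) the pattern profiles of the pseudovertices v_U and v_{Ū} in their respective convex combinations are equal, and (ii) for every tour F ∈ 𝓕^U, F minus the edges incident on v_{Ū} induces a connected multigraph on U. Then x can be written as a convex combination {φ, 𝓕} of handpicked tours of G_x such that (a) φ₂(e) = φ₂^U(e) for every e ∈ E(G_x^U), (b) φ₂(e) = φ₂^{Ū}(e) for every e ∈ E(G_x^{Ū}), and (c) |𝓕| ≤ |𝓕^U|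 + |𝓕^{Ū}|. -/
/-!
Equal pattern profiles at the pseudovertices say that `lamU` and `lamW` induce the same
distribution on the multiplicities of the three cut edges. A greedy coupling of the two
combinations pairs tours with equal cut multiplicities, and since every greedy step exhausts the
weight of one tour, at most `kU + kW` pairs get positive weight. Each pair is glued into one
multigraph on `V`: an edge is read in the tour of the side containing an endpoint, consistently
on the cut. Degrees and patterns at a vertex are then those of the tour on its side, the vertices
of `U` are connected through the `U`-tour, and every vertex outside `U` reaches `U` along the
`Uᶜ`-tour, whose edges at the pseudovertex are cut edges. The marginals of the coupling give back
`x` and the values of `φ₂`.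
-/

open scoped Classical

noncomputable section

namespace TSPPaper

variable {V : Type*} [Fintype V] [DecidableEq V]

section Coupling

open Finset

variable {ι κ P : Type*}

lemma sum_pi_single_prod_left [Fintype κ] (i₀ : ι) (j₀ : κ) (μ : ℝ) (i : ι) :
    ∑ j, (Pi.single (i₀, j₀) μ : ι × κ → ℝ) (i, j) = (Pi.single i₀ μ : ι → ℝ) i := by
  by_cases hi : i = i₀
  · subst hi; simp [Pi.single_apply]
  · simp [hi]

lemma sum_pi_single_prod_right [Fintype ι] (i₀ : ι) (j₀ : κ) (μ : ℝ) (j : κ) :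
    ∑ i, (Pi.single (i₀, j₀) μ : ι × κ → ℝ) (i, j) = (Pi.single j₀ μ : κ → ℝ) j := by
  by_cases hj : j = j₀
  · subst hj; simp [Pi.single_apply]
  · simp [hj]

lemma sub_pi_single_nonneg {a : ι → ℝ} (ha : ∀ i, 0 ≤ a i) {i₀ : ι} {μ : ℝ} (hμ : μ ≤ a i₀)
    (i : ι) : 0 ≤ (a - (Pi.single i₀ μ : ι → ℝ)) i := by
  by_cases hi : i = i₀
  · subst hi; simpa using hμ
  · simpa [hi] using ha i

lemma sum_filter_sub_pi_single [Fintype ι] [DecidableEq P] (pa : ι → P) (a : ι → ℝ) (i₀ : ι)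
    (μ : ℝ) (p : P) :
    ∑ i with pa i = p, (a - (Pi.single i₀ μ : ι → ℝ)) i =
      (∑ i with pa i = p, a i) - if pa i₀ = p then μ else 0 := by
  simp [sum_sub_distrib, sum_pi_single']

lemma filter_sub_pi_single_ne_zero_subset [Fintype ι] {a : ι → ℝ} {i₀ : ι} (h : a i₀ ≠ 0)
    (μ : ℝ) :
    ({i | (a - (Pi.single i₀ μ : ι → ℝ)) i ≠ 0} : Finset ι) ⊆ ({i | a i ≠ 0} : Finset ι) :=
  fun i => by
    by_cases hi : i = i₀
    · subst hi; simpa using fun _ => h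
    · simp [hi]

lemma card_filter_sub_pi_single_ne_zero_lt [Fintype ι] {a : ι → ℝ} {i₀ : ι} {μ : ℝ}
    (h : a i₀ ≠ 0) (hμ : μ = a i₀) :
    #{i | (a - (Pi.single i₀ μ : ι → ℝ)) i ≠ 0} < #{i | a i ≠ 0} :=
  card_lt_card <| (ssubset_iff_of_subset (filter_sub_pi_single_ne_zero_subset h _)).mpr
    ⟨i₀, by simpa using h, by simp [hμ]⟩

structure IsCoupling [Fintype ι] [Fintype κ] (pa : ι → P) (pb : κ → P) (a : ι → ℝ)
    (b : κ → ℝ) (w : ι × κ → ℝ) : Prop where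
  nonneg : ∀ q, 0 ≤ w q
  compat : ∀ q, w q ≠ 0 → pa q.1 = pb q.2
  sum_fst : ∀ i, ∑ j, w (i, j) = a i
  sum_snd : ∀ j, ∑ i, w (i, j) = b j

variable [Fintype ι] [Fintype κ] {pa : ι → P} {pb : κ → P} {a : ι → ℝ} {b : κ → ℝ}

lemma IsCoupling.add_pi_single {w : ι × κ → ℝ} {i₀ : ι} {j₀ : κ} {μ : ℝ}
    (hw : IsCoupling pa pb (a - Pi.single i₀ μ) (b - Pi.single j₀ μ) w) (hμ : 0 ≤ μ)
    (hij : pa i₀ = pb j₀) : IsCoupling pa pb a b (w + Pi.single (i₀, j₀) μ) where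
  nonneg q := by
    by_cases hq : q = (i₀, j₀)
    · subst hq; simpa using add_nonneg (hw.nonneg _) hμ
    · simpa [hq] using hw.nonneg q
  compat q hq := by
    by_cases hq' : q = (i₀, j₀)
    · subst hq'; exact hij
    · exact hw.compat q (by simpa [hq'] using hq)
  sum_fst i := by simp [sum_add_distrib, hw.sum_fst, sum_pi_single_prod_left]
  sum_snd j := by simp [sum_add_distrib, hw.sum_snd, sum_pi_single_prod_right]

variable [DecidableEq P]

lemma exists_pos_of_sum_filter_eq (ha : ∀ i, 0 ≤ a i)
    (hab : ∀ p, ∑ i with pa i = p, a i = ∑ j with pb j = p, b j) {i₀ : ι} (hi₀ : 0 < a i₀) :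
    ∃ j₀, pb j₀ = pa i₀ ∧ 0 < b j₀ := by
  have hclass : 0 < ∑ j with pb j = pa i₀, b j :=
    hab (pa i₀) ▸ hi₀.trans_le (single_le_sum (fun i _ => ha i) (by simp))
  obtain ⟨j, hj, hpos⟩ := exists_lt_of_sum_lt (f := fun _ => (0 : ℝ)) (by simpa using hclass)
  exact ⟨j, (mem_filter.mp hj).2, hpos⟩

lemma isCoupling_zero (hb : ∀ j, 0 ≤ b j)
    (hab : ∀ p, ∑ i with pa i = p, a i = ∑ j with pb j = p, b j) (ha0 : ∀ i, a i = 0) :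
    IsCoupling pa pb a b 0 := by
  have hb0 : ∀ j, b j = 0 := fun j => by
    have hclass : ∑ j' with pb j' = pb j, b j' = 0 := by
      rw [← hab]; exact sum_eq_zero fun i _ => ha0 i
    exact (sum_eq_zero_iff_of_nonneg fun j' _ => hb j').mp hclass j (by simp)
  exact ⟨fun _ => le_rfl, fun _ h => absurd rfl h, by simp [ha0], by simp [hb0]⟩

theorem exists_coupling (pa : ι → P) (pb : κ → P) (a : ι → ℝ) (b : κ → ℝ)
    (ha : ∀ i, 0 ≤ a i) (hb : ∀ j, 0 ≤ b j)
    (hab : ∀ p, ∑ i with pa i = p, a i = ∑ j with pb j = p, b j) :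
    ∃ w, IsCoupling pa pb a b w ∧ #{q | w q ≠ 0} ≤ #{i | a i ≠ 0} + #{j | b j ≠ 0} := by
  induction hN : #{i | a i ≠ 0} + #{j | b j ≠ 0} using Nat.strong_induction_on
    generalizing a b with
  | _ N ih =>
  by_cases ha0 : ∀ i, a i = 0
  · exact ⟨0, isCoupling_zero hb hab ha0, by simp⟩
  push Not at ha0
  obtain ⟨i₀, hi₀⟩ := ha0
  have hai₀ : 0 < a i₀ := (ha i₀).lt_of_ne' hi₀
  obtain ⟨j₀, hj₀, hbj₀⟩ := exists_pos_of_sum_filter_eq ha hab hai₀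
  -- Greedy step: move the mass `μ` to the pair `(i₀, j₀)`; this exhausts `a i₀` or `b j₀`.
  set μ := min (a i₀) (b j₀)
  set a' : ι → ℝ := a - Pi.single i₀ μ
  set b' : κ → ℝ := b - Pi.single j₀ μ
  have hlt : #{i | a' i ≠ 0} + #{j | b' j ≠ 0} < N := by
    have hsub_a : #{i | a' i ≠ 0} ≤ #{i | a i ≠ 0} :=
      card_le_card (filter_sub_pi_single_ne_zero_subset hi₀ μ)
    have hsub_b : #{j | b' j ≠ 0} ≤ #{j | b j ≠ 0} :=
      card_le_card (filter_sub_pi_single_ne_zero_subset hbj₀.ne' μ)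
    rcases min_choice (a i₀) (b j₀) with h | h
    · have : #{i | a' i ≠ 0} < #{i | a i ≠ 0} := card_filter_sub_pi_single_ne_zero_lt hi₀ h
      omega
    · have : #{j | b' j ≠ 0} < #{j | b j ≠ 0} :=
        card_filter_sub_pi_single_ne_zero_lt hbj₀.ne' h
      omega
  have hab' : ∀ p, ∑ i with pa i = p, a' i = ∑ j with pb j = p, b' j := fun p => by
    rw [sum_filter_sub_pi_single, sum_filter_sub_pi_single, hab, hj₀]
  obtain ⟨w, hw, hwcard⟩ := ih _ hlt a' b' (sub_pi_single_nonneg ha (min_le_left _ _))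
    (sub_pi_single_nonneg hb (min_le_right _ _)) hab' rfl
  refine ⟨w + Pi.single (i₀, j₀) μ, hw.add_pi_single (lt_min hai₀ hbj₀).le hj₀.symm, ?_⟩
  have hsub : ({q | (w + (Pi.single (i₀, j₀) μ : ι × κ → ℝ)) q ≠ 0} : Finset (ι × κ)) ⊆
      insert (i₀, j₀) ({q | w q ≠ 0} : Finset (ι × κ)) := fun q => by
    by_cases hq : q = (i₀, j₀) <;> simp [hq]
  have := (card_le_card hsub).trans (card_insert_le _ _)
  omega

end Coupling

section Contraction

variable {x : Sym2 V → ℝ} {S : Finset V}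

def HasDisjointCutEdges (x : Sym2 V → ℝ) (S : Finset V) : Prop :=
  ∀ e ∈ cutEdges x S, ∀ f ∈ cutEdges x S, e ≠ f → ∀ w : V, w ∈ e → w ∈ f → False

omit [Fintype V] in
lemma contractMap_of_mem_s9 {w : V} (h : w ∈ S) : contractMap S w = some ⟨w, h⟩ := dif_pos h

omit [Fintype V] in
lemma contractMap_of_notMem_s9 {w : V} (h : w ∉ S) : contractMap S w = none := dif_neg h

omit [Fintype V] in
lemma contractMap_eq_none_iff {w : V} : contractMap S w = none ↔ w ∉ S := by
  by_cases hw : w ∈ S <;> simp [contractMap, hw]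

omit [Fintype V] in
lemma contractMap_eq_some_iff {w a : V} (ha : a ∈ S) :
    contractMap S w = some ⟨a, ha⟩ ↔ w = a := by
  by_cases hw : w ∈ S
  · simp [contractMap, hw]
  · simp only [contractMap, hw, dite_false, reduceCtorEq, false_iff]
    rintro rfl
    exact hw ha

omit [Fintype V] in
lemma map_mk_eq_some_some_iff {a b c d : V} (ha : a ∈ S) (hb : b ∈ S) :
    Sym2.map (contractMap S) s(c, d) = s((some ⟨a, ha⟩ : Contracted S), some ⟨b, hb⟩) ↔
      s(c, d) = s(a, b) := by
  simp only [Sym2.map_mk, Sym2.eq_iff, contractMap_eq_some_iff]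

omit [Fintype V] in
lemma map_mk_eq_some_none_iff {v c d : V} (hv : v ∈ S) :
    Sym2.map (contractMap S) s(c, d) = s((some ⟨v, hv⟩ : Contracted S), none) ↔
      (c = v ∧ d ∉ S) ∨ (d = v ∧ c ∉ S) := by
  simp only [Sym2.map_mk, Sym2.eq_iff, contractMap_eq_some_iff, contractMap_eq_none_iff]
  tauto

lemma mem_cutEdges_iff {e : Sym2 V} :
    e ∈ cutEdges x S ↔ 0 < x e ∧ ∃ u w : V, e = s(u, w) ∧ u ∈ S ∧ w ∉ S := by
  simp only [cutEdges, crossEdges, Finset.mem_filter, Finset.mem_univ, true_and]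
  tauto

lemma crossEdges_compl (S : Finset V) : crossEdges Sᶜ = crossEdges S := by
  ext e
  simp only [crossEdges, Finset.mem_filter, Finset.mem_univ, true_and, Finset.mem_compl,
    not_not]
  constructor <;> rintro ⟨u, w, rfl, hu, hw⟩ <;> exact ⟨w, u, Sym2.eq_swap, hw, hu⟩

lemma cutEdges_compl (x : Sym2 V → ℝ) (S : Finset V) : cutEdges x Sᶜ = cutEdges x S := by
  rw [cutEdges, crossEdges_compl, cutEdges]

lemma HasDisjointCutEdges.compl (hdisj : HasDisjointCutEdges x S) :
    HasDisjointCutEdges x Sᶜ := by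
  rwa [HasDisjointCutEdges, cutEdges_compl]

lemma HasDisjointCutEdges.eq_of_pos (hdisj : HasDisjointCutEdges x S) {v b b' : V}
    (hv : v ∈ S) (hb : b ∉ S) (hb' : b' ∉ S) (h : 0 < x s(v, b)) (h' : 0 < x s(v, b')) :
    b = b' := by
  by_contra hne
  exact hdisj _ (mem_cutEdges_iff.mpr ⟨h, v, b, rfl, hv, hb⟩)
    _ (mem_cutEdges_iff.mpr ⟨h', v, b', rfl, hv, hb'⟩) (by rwa [Ne, Sym2.congr_right]) v
    (Sym2.mem_mk_left _ _) (Sym2.mem_mk_left _ _)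

lemma HasDisjointCutEdges.eq_zero (hnn : ∀ e : Sym2 V, 0 ≤ x e)
    (hdisj : HasDisjointCutEdges x S) {v b u : V} (hv : v ∈ S) (hb : b ∉ S) (hu : u ∉ S)
    (hpos : 0 < x s(v, b)) (hub : u ≠ b) : x s(v, u) = 0 :=
  ((hnn _).lt_or_eq.resolve_left fun h => hub (hdisj.eq_of_pos hv hu hb h hpos)).symm

lemma contractPoint_eq_sum {d : Sym2 (Contracted S)} (hd : ¬d.IsDiag) :
    contractPoint x S d = ∑ e with Sym2.map (contractMap S) e = d, x e := by
  rw [contractPoint, if_neg hd]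

lemma contractPoint_map_of_mem (hdiag : ∀ e : Sym2 V, e.IsDiag → x e = 0) {a b : V}
    (ha : a ∈ S) (hb : b ∈ S) :
    contractPoint x S (Sym2.map (contractMap S) s(a, b)) = x s(a, b) := by
  rcases eq_or_ne a b with rfl | hab
  · rw [contractPoint, if_pos (by simp), hdiag _ (by simp)]
  have hmap : Sym2.map (contractMap S) s(a, b) = s(some ⟨a, ha⟩, some ⟨b, hb⟩) := by
    rw [Sym2.map_mk, contractMap_of_mem_s9 ha, contractMap_of_mem_s9 hb]
  rw [contractPoint_eq_sum (by simpa [hmap] using hab), hmap]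
  have hfiber : ({e | Sym2.map (contractMap S) e = s(some ⟨a, ha⟩, some ⟨b, hb⟩)} :
      Finset (Sym2 V)) = {s(a, b)} := by
    ext e
    induction e using Sym2.ind with
    | _ c d => simpa using map_mk_eq_some_some_iff ha hb
  rw [hfiber, Finset.sum_singleton]

lemma contractPoint_map_of_pos (hdiag : ∀ e : Sym2 V, e.IsDiag → x e = 0)
    (hnn : ∀ e : Sym2 V, 0 ≤ x e) (hdisj : HasDisjointCutEdges x S) {v : V} (hv : v ∈ S)
    {e : Sym2 V} (hve : v ∈ e) (hpos : 0 < x e) :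
    contractPoint x S (Sym2.map (contractMap S) e) = x e := by
  obtain ⟨b, rfl⟩ := Sym2.mem_iff_exists.mp hve
  by_cases hb : b ∈ S
  · exact contractPoint_map_of_mem hdiag hv hb
  have hmap : Sym2.map (contractMap S) s(v, b) = s(some ⟨v, hv⟩, none) := by
    rw [Sym2.map_mk, contractMap_of_mem_s9 hv, contractMap_of_notMem_s9 hb]
  rw [hmap, contractPoint_eq_sum (by simp)]
  refine Finset.sum_eq_single_of_mem _ (by simp [← hmap]) fun e he hne => ?_
  induction e using Sym2.ind with
  | _ c d =>
    rcases (map_mk_eq_some_none_iff hv).mp (Finset.mem_filter.mp he).2 with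
      ⟨rfl, hd⟩ | ⟨rfl, hc⟩
    · exact hdisj.eq_zero hnn hv hb hd hpos fun h => hne (by rw [h])
    · rw [Sym2.eq_swap]
      exact hdisj.eq_zero hnn hv hb hc hpos fun h => hne (by rw [h, Sym2.eq_swap])

lemma contractPoint_some_none_eq_zero {v : V} (hv : v ∈ S) (h : ∀ u, u ∉ S → x s(v, u) = 0) :
    contractPoint x S s(some ⟨v, hv⟩, none) = 0 := by
  rw [contractPoint_eq_sum (by simp)]
  refine Finset.sum_eq_zero fun e he => ?_
  induction e using Sym2.ind with
  | _ c d =>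
    rcases (map_mk_eq_some_none_iff hv).mp (Finset.mem_filter.mp he).2 with
      ⟨rfl, hd⟩ | ⟨rfl, hc⟩
    · exact h d hd
    · rw [Sym2.eq_swap]; exact h c hc

lemma exists_map_eq_of_contractPoint_pos (hdiag : ∀ e : Sym2 V, e.IsDiag → x e = 0) {v : V}
    (hv : v ∈ S) {d : Sym2 (Contracted S)} (hvd : some ⟨v, hv⟩ ∈ d) (hd : 0 < contractPoint x S d) :
    ∃ e, v ∈ e ∧ 0 < x e ∧ Sym2.map (contractMap S) e = d := by
  obtain ⟨o, rfl⟩ := Sym2.mem_iff_exists.mp hvd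
  cases o with
  | some b =>
    have hmap : Sym2.map (contractMap S) s(v, b) = s(some ⟨v, hv⟩, some b) := by
      rw [Sym2.map_mk, contractMap_of_mem_s9 hv, contractMap_of_mem_s9 b.2]
    refine ⟨s(v, b), Sym2.mem_mk_left _ _, ?_, hmap⟩
    rwa [← contractPoint_map_of_mem hdiag hv b.2, hmap]
  | none =>
    rw [contractPoint_eq_sum (by simp)] at hd
    obtain ⟨e, he, hpos⟩ := Finset.exists_lt_of_sum_lt (f := fun _ => (0 : ℝ)) (by simpa using hd)
    have hmap := (Finset.mem_filter.mp he).2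
    refine ⟨e, ?_, hpos, hmap⟩
    induction e using Sym2.ind with
    | _ c d =>
      rcases (map_mk_eq_some_none_iff hv).mp hmap with ⟨rfl, -⟩ | ⟨rfl, -⟩ <;> simp

lemma eq_of_map_eq_of_pos (hdisj : HasDisjointCutEdges x S) {v : V} (hv : v ∈ S) {e e' : Sym2 V}
    (hve : v ∈ e) (hpos : 0 < x e) (hve' : v ∈ e') (hpos' : 0 < x e')
    (h : Sym2.map (contractMap S) e = Sym2.map (contractMap S) e') : e = e' := by
  obtain ⟨b, rfl⟩ := Sym2.mem_iff_exists.mp hve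
  obtain ⟨b', rfl⟩ := Sym2.mem_iff_exists.mp hve'
  rw [Sym2.map_mk, Sym2.map_mk, Sym2.congr_right] at h
  rw [Sym2.congr_right]
  by_cases hb : b ∈ S
  · rw [contractMap_of_mem_s9 hb, eq_comm, contractMap_eq_some_iff] at h
    exact h.symm
  · rw [contractMap_of_notMem_s9 hb, eq_comm, contractMap_eq_none_iff] at h
    exact hdisj.eq_of_pos hv hb h hpos hpos'

end Contraction

lemma reachable_map_of_adj_reachable {α β : Type*} {G : SimpleGraph α} {H : SimpleGraph β}
    (f : α → β) (hf : ∀ a b, G.Adj a b → H.Reachable (f a) (f b)) {a b : α}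
    (h : G.Reachable a b) : H.Reachable (f a) (f b) := by
  obtain ⟨p⟩ := h
  induction p with
  | nil => rfl
  | cons hadj _ ih => exact (hf _ _ hadj).trans ih

section Lift

variable {x : Sym2 V → ℝ} {S : Finset V} {F : Sym2 V → ℕ} {G : Sym2 (Contracted S) → ℕ}

def LiftsAt (x : Sym2 V → ℝ) (S : Finset V) (F : Sym2 V → ℕ) (G : Sym2 (Contracted S) → ℕ) :
    Prop :=
  ∀ e, 0 < x e → (∃ w, w ∈ e ∧ w ∈ S) → F e = G (Sym2.map (contractMap S) e)

lemma LiftsAt.apply_eq_of_contractPoint_eq (hFG : LiftsAt x S F G)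
    (hF : ∀ e, F e ≠ 0 → 0 < x e) (hG : ∀ d, G d ≠ 0 → 0 < contractPoint x S d) {v : V}
    (hv : v ∈ S) {e : Sym2 V} (hve : v ∈ e)
    (he : contractPoint x S (Sym2.map (contractMap S) e) = x e) :
    F e = G (Sym2.map (contractMap S) e) := by
  by_cases hpos : 0 < x e
  · exact hFG e hpos ⟨v, hve, hv⟩
  have hFe : F e = 0 := by_contra fun h => hpos (hF e h)
  have hGe : G (Sym2.map (contractMap S) e) = 0 := by_contra fun h => hpos (he ▸ hG _ h)
  rw [hFe, hGe]

lemma LiftsAt.multiDeg_eq (hdiag : ∀ e : Sym2 V, e.IsDiag → x e = 0)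
    (hnn : ∀ e : Sym2 V, 0 ≤ x e) (hdisj : HasDisjointCutEdges x S) (hFG : LiftsAt x S F G)
    (hF : ∀ e, F e ≠ 0 → 0 < x e) (hG : ∀ d, G d ≠ 0 → 0 < contractPoint x S d) {v : V}
    (hv : v ∈ S) : multiDeg F v = multiDeg G (some ⟨v, hv⟩) := by
  rw [multiDeg, ← Finset.sum_fiberwise Finset.univ (contractMap S) fun u => F s(v, u), multiDeg]
  refine Fintype.sum_congr _ _ fun o => ?_
  cases o with
  | some a =>
    have hfiber : ({u | contractMap S u = some a} : Finset V) = {a.1} := by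
      ext u; simpa using contractMap_eq_some_iff a.2
    rw [hfiber, Finset.sum_singleton, hFG.apply_eq_of_contractPoint_eq hF hG hv
      (Sym2.mem_mk_left _ _) (contractPoint_map_of_mem hdiag hv a.2), Sym2.map_mk,
      contractMap_of_mem_s9 hv, contractMap_of_mem_s9 a.2]
  | none =>
    simp only [contractMap_eq_none_iff]
    by_cases hcut : ∃ b, b ∉ S ∧ 0 < x s(v, b)
    · obtain ⟨b, hb, hpos⟩ := hcut
      rw [Finset.sum_eq_single_of_mem b (by simpa using hb) fun u hu hub => ?_,
        hFG _ hpos ⟨v, Sym2.mem_mk_left _ _, hv⟩, Sym2.map_mk, contractMap_of_mem_s9 hv,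
        contractMap_of_notMem_s9 hb]
      exact by_contra fun h => (hF _ h).ne'
        (hdisj.eq_zero hnn hv hb (by simpa using hu) hpos hub)
    · push Not at hcut
      have hzero : ∀ u, u ∉ S → x s(v, u) = 0 := fun u hu => le_antisymm (hcut u hu) (hnn _)
      have hGzero : G s(some ⟨v, hv⟩, none) = 0 := by_contra fun h =>
        (hG _ h).ne' (contractPoint_some_none_eq_zero hv hzero)
      rw [hGzero]
      exact Finset.sum_eq_zero fun u hu => by_contra fun h =>
        (hF _ h).ne' (hzero u (by simpa using hu))

lemma LiftsAt.adj (hdiag : ∀ e : Sym2 V, e.IsDiag → x e = 0) (hFG : LiftsAt x S F G)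
    (hG : ∀ d, G d ≠ 0 → 0 < contractPoint x S d) {a b : V} (ha : a ∈ S) (hb : b ∈ S)
    (h : (supportGraph G).Adj (some ⟨a, ha⟩) (some ⟨b, hb⟩)) : (supportGraph F).Adj a b := by
  obtain ⟨hne, hpos⟩ := h
  have hmap : Sym2.map (contractMap S) s(a, b) = s(some ⟨a, ha⟩, some ⟨b, hb⟩) := by
    rw [Sym2.map_mk, contractMap_of_mem_s9 ha, contractMap_of_mem_s9 hb]
  have hx : 0 < x s(a, b) := by
    rw [← contractPoint_map_of_mem hdiag ha hb, hmap]
    exact hG _ hpos.ne'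
  refine ⟨fun hab => hne (by subst hab; rfl), ?_⟩
  rw [hFG _ hx ⟨a, Sym2.mem_mk_left _ _, ha⟩, hmap]
  exact hpos

lemma LiftsAt.exists_adj_of_pos_none (hdiag : ∀ e : Sym2 V, e.IsDiag → x e = 0)
    (hFG : LiftsAt x S F G) (hG : ∀ d, G d ≠ 0 → 0 < contractPoint x S d) {a : V} (ha : a ∈ S)
    (h : 0 < G s(some ⟨a, ha⟩, none)) : ∃ u, u ∉ S ∧ (supportGraph F).Adj a u := by
  obtain ⟨e, hae, hpos, hmap⟩ :=
    exists_map_eq_of_contractPoint_pos hdiag ha (Sym2.mem_mk_left _ _) (hG _ h.ne')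
  obtain ⟨u, rfl⟩ := Sym2.mem_iff_exists.mp hae
  have hu : u ∉ S := by
    rcases (map_mk_eq_some_none_iff ha).mp hmap with ⟨-, hu⟩ | ⟨rfl, hu⟩
    exacts [hu, hu]
  refine ⟨u, hu, fun hau => hu (hau ▸ ha), ?_⟩
  rw [hFG _ hpos ⟨a, Sym2.mem_mk_left _ _, ha⟩, hmap]
  exact h

lemma LiftsAt.reachable_of_connected_induce (hdiag : ∀ e : Sym2 V, e.IsDiag → x e = 0)
    (hFG : LiftsAt x S F G) (hG : ∀ d, G d ≠ 0 → 0 < contractPoint x S d)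
    (hconn : ((supportGraph G).induce {w : Contracted S | w ≠ none}).Connected) {a b : V}
    (ha : a ∈ S) (hb : b ∈ S) : (supportGraph F).Reachable a b := by
  let φ : {w : Contracted S // w ≠ none} → V :=
    fun w => (w.1.get (Option.isSome_iff_ne_none.mpr w.2)).1
  have hφ : ∀ w w', ((supportGraph G).induce {w : Contracted S | w ≠ none}).Adj w w' →
      (supportGraph F).Reachable (φ w) (φ w') := by
    rintro ⟨_ | a, ha⟩ ⟨_ | b, hb⟩ h
    · exact absurd rfl ha
    · exact absurd rfl ha
    · exact absurd rfl hb
    · exact (hFG.adj hdiag hG a.2 b.2 h).reachable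
  exact reachable_map_of_adj_reachable φ hφ
    (hconn.preconnected ⟨some ⟨a, ha⟩, by simp⟩ ⟨some ⟨b, hb⟩, by simp⟩)

lemma LiftsAt.connected {T : Finset V} {G : Sym2 (Contracted Tᶜ) → ℕ}
    (hdiag : ∀ e : Sym2 V, e.IsDiag → x e = 0) (hFG : LiftsAt x Tᶜ F G)
    (hG : ∀ d, G d ≠ 0 → 0 < contractPoint x Tᶜ d) (hGconn : (supportGraph G).Connected)
    {u₀ : V} (hu₀ : u₀ ∈ T) (hT : ∀ p ∈ T, ∀ q ∈ T, (supportGraph F).Reachable p q) :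
    (supportGraph F).Connected := by
  let φ : Contracted Tᶜ → V := fun o => o.elim u₀ Subtype.val
  have hnone : ∀ a (ha : a ∈ Tᶜ), 0 < G s(some ⟨a, ha⟩, none) →
      (supportGraph F).Reachable u₀ a := fun a ha h => by
    obtain ⟨u, hu, hadj⟩ := hFG.exists_adj_of_pos_none hdiag hG ha h
    exact (hT u₀ hu₀ u (by simpa using hu)).trans hadj.symm.reachable
  have hφ : ∀ o o', (supportGraph G).Adj o o' → (supportGraph F).Reachable (φ o) (φ o') := by
    rintro (_ | ⟨a, ha⟩) (_ | ⟨b, hb⟩) h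
    · exact absurd rfl h.1
    · exact hnone b hb (by rw [Sym2.eq_swap]; exact h.2)
    · exact (hnone a ha h.2).symm
    · exact (hFG.adj hdiag hG ha hb h).reachable
  have hreach : ∀ p, (supportGraph F).Reachable u₀ p := fun p => by
    by_cases hp : p ∈ T
    · exact hT u₀ hu₀ p hp
    · exact reachable_map_of_adj_reachable φ hφ
        (hGconn.preconnected none (some ⟨p, Finset.mem_compl.mpr hp⟩))
  exact (SimpleGraph.connected_iff _).mpr
    ⟨fun p q => (hreach p).symm.trans (hreach q), ⟨u₀⟩⟩

-- `Handpicked x F` unfolds to `∀ u, HandpickedAt x F u`.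
def HandpickedAt (x : Sym2 V → ℝ) (F : Sym2 V → ℕ) (u : V) : Prop :=
  ∃ e f g : Sym2 V,
    u ∈ e ∧ u ∈ f ∧ u ∈ g ∧ e ≠ f ∧ e ≠ g ∧ f ≠ g ∧
    x e = 1 ∧ 0 < x f ∧ x f < 1 ∧ 0 < x g ∧ x g < 1 ∧
    (∀ e' : Sym2 V, 0 < x e' → u ∈ e' → e' = e ∨ e' = f ∨ e' = g) ∧
    patternOK (F e) (F f) (F g)

lemma LiftsAt.handpickedAt (hdiag : ∀ e : Sym2 V, e.IsDiag → x e = 0)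
    (hnn : ∀ e : Sym2 V, 0 ≤ x e) (hdisj : HasDisjointCutEdges x S) (hFG : LiftsAt x S F G)
    {v : V} (hv : v ∈ S) (h : HandpickedAt (contractPoint x S) G (some ⟨v, hv⟩)) :
    HandpickedAt x F v := by
  obtain ⟨e', f', g', hve', hvf', hvg', hef', heg', hfg', he1, hf0, hf1, hg0, hg1, hclos, hpat⟩ :=
    h
  obtain ⟨e, hve, he0, rfl⟩ :=
    exists_map_eq_of_contractPoint_pos hdiag hv hve' (by rw [he1]; exact one_pos)
  obtain ⟨f, hvf, hf0', rfl⟩ := exists_map_eq_of_contractPoint_pos hdiag hv hvf' hf0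
  obtain ⟨g, hvg, hg0', rfl⟩ := exists_map_eq_of_contractPoint_pos hdiag hv hvg' hg0
  have hx : ∀ {e}, v ∈ e → 0 < x e → contractPoint x S (Sym2.map (contractMap S) e) = x e :=
    contractPoint_map_of_pos hdiag hnn hdisj hv
  rw [hx hve he0] at he1
  rw [hx hvf hf0'] at hf1
  rw [hx hvg hg0'] at hg1
  refine ⟨e, f, g, hve, hvf, hvg, ne_of_apply_ne _ hef', ne_of_apply_ne _ heg',
    ne_of_apply_ne _ hfg', he1, hf0', hf1, hg0', hg1, fun e'' hpos hve'' => ?_, ?_⟩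
  · rcases hclos _ (by rwa [hx hve'' hpos]) (Sym2.mem_map.mpr ⟨v, hve'', contractMap_of_mem_s9 hv⟩)
      with h | h | h
    · exact Or.inl (eq_of_map_eq_of_pos hdisj hv hve'' hpos hve he0 h)
    · exact Or.inr (Or.inl (eq_of_map_eq_of_pos hdisj hv hve'' hpos hvf hf0' h))
    · exact Or.inr (Or.inr (eq_of_map_eq_of_pos hdisj hv hve'' hpos hvg hg0' h))
  · rwa [hFG e he0 ⟨v, hve, hv⟩, hFG f hf0' ⟨v, hvf, hv⟩, hFG g hg0' ⟨v, hvg, hv⟩]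

end Lift

section Glue

variable {x : Sym2 V → ℝ} {U : Finset V} {G : Sym2 (Contracted U) → ℕ}
  {H : Sym2 (Contracted Uᶜ) → ℕ}

def glue (x : Sym2 V → ℝ) (U : Finset V) (G : Sym2 (Contracted U) → ℕ)
    (H : Sym2 (Contracted Uᶜ) → ℕ) (e : Sym2 V) : ℕ :=
  if 0 < x e then
    if ∃ w, w ∈ e ∧ w ∈ U then G (Sym2.map (contractMap U) e)
    else H (Sym2.map (contractMap Uᶜ) e)
  else 0

def AgreeOnCut (x : Sym2 V → ℝ) (U : Finset V) (G : Sym2 (Contracted U) → ℕ)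
    (H : Sym2 (Contracted Uᶜ) → ℕ) : Prop :=
  ∀ c ∈ cutEdges x U, G (Sym2.map (contractMap U) c) = H (Sym2.map (contractMap Uᶜ) c)

lemma pos_of_glue_ne_zero {e : Sym2 V} (h : glue x U G H e ≠ 0) : 0 < x e := by
  by_contra hpos
  exact h (if_neg hpos)

lemma liftsAt_glue_left : LiftsAt x U (glue x U G H) G := fun _ hpos hU => by
  rw [glue, if_pos hpos, if_pos hU]

lemma agreeOnCut_of_cutEdges_eq {c₁ c₂ c₃ : Sym2 V} (hcut : cutEdges x U = {c₁, c₂, c₃})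
    (h : (G (Sym2.map (contractMap U) c₁), G (Sym2.map (contractMap U) c₂),
        G (Sym2.map (contractMap U) c₃)) =
      (H (Sym2.map (contractMap Uᶜ) c₁), H (Sym2.map (contractMap Uᶜ) c₂),
        H (Sym2.map (contractMap Uᶜ) c₃))) :
    AgreeOnCut x U G H := by
  intro c hc
  simp only [hcut, Finset.mem_insert, Finset.mem_singleton, Prod.mk.injEq] at hc h
  rcases hc with rfl | rfl | rfl <;> tauto

lemma liftsAt_glue_right (hGH : AgreeOnCut x U G H) : LiftsAt x Uᶜ (glue x U G H) H := by
  intro e hpos ⟨w, hwe, hw⟩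
  by_cases hU : ∃ u, u ∈ e ∧ u ∈ U
  · obtain ⟨u, hue, hu⟩ := hU
    obtain ⟨b, rfl⟩ := Sym2.mem_iff_exists.mp hue
    have hb : b ∉ U := by
      rcases Sym2.mem_iff.mp hwe with rfl | rfl
      · exact absurd hu (Finset.mem_compl.mp hw)
      · exact Finset.mem_compl.mp hw
    rw [liftsAt_glue_left _ hpos ⟨u, hue, hu⟩]
    exact hGH _ (mem_cutEdges_iff.mpr ⟨hpos, u, b, rfl, hu, hb⟩)
  · rw [glue, if_pos hpos, if_neg hU]

lemma isTourSupp_glue (hdiag : ∀ e : Sym2 V, e.IsDiag → x e = 0)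
    (hnn : ∀ e : Sym2 V, 0 ≤ x e) (hdisj : HasDisjointCutEdges x U)
    (hG : IsTourSupp (contractPoint x U) G) (hH : IsTourSupp (contractPoint x Uᶜ) H)
    (hGH : AgreeOnCut x U G H)
    (hconn : ((supportGraph G).induce {w : Contracted U | w ≠ none}).Connected) :
    IsTourSupp x (glue x U G H) := by
  have hF : ∀ e, glue x U G H e ≠ 0 → 0 < x e := fun e => pos_of_glue_ne_zero
  refine ⟨⟨fun e he => by_contra fun h => (hF e h).ne' (hdiag e he), fun v => ?_, ?_⟩, hF⟩
  · by_cases hv : v ∈ U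
    · rw [liftsAt_glue_left.multiDeg_eq hdiag hnn hdisj hF hG.2 hv]
      exact hG.1.2.1 _
    · rw [(liftsAt_glue_right hGH).multiDeg_eq hdiag hnn hdisj.compl hF hH.2
        (Finset.mem_compl.mpr hv)]
      exact hH.1.2.1 _
  · obtain ⟨⟨w, hw⟩⟩ := hconn.nonempty
    obtain ⟨⟨u₀, hu₀⟩, -⟩ := Option.ne_none_iff_exists.mp hw
    exact (liftsAt_glue_right hGH).connected hdiag hH.2 hH.1.2.2 hu₀ fun p hp q hq =>
      liftsAt_glue_left.reachable_of_connected_induce hdiag hG.2 hconn hp hq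

lemma handpicked_glue (hdiag : ∀ e : Sym2 V, e.IsDiag → x e = 0)
    (hnn : ∀ e : Sym2 V, 0 ≤ x e) (hdisj : HasDisjointCutEdges x U)
    (hG : Handpicked (contractPoint x U) G) (hH : Handpicked (contractPoint x Uᶜ) H)
    (hGH : AgreeOnCut x U G H) : Handpicked x (glue x U G H) := fun v => by
  by_cases hv : v ∈ U
  · exact liftsAt_glue_left.handpickedAt hdiag hnn hdisj hv (hG _)
  · exact (liftsAt_glue_right hGH).handpickedAt hdiag hnn hdisj.compl
      (Finset.mem_compl.mpr hv) (hH _)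

end Glue

section Combination

open Finset

variable {ι κ : Type*} [Fintype ι] [Fintype κ]

lemma sum_mul_fst {ν : ι × κ → ℝ} {a : ι → ℝ} (hrow : ∀ i, ∑ j, ν (i, j) = a i) (f : ι → ℝ) :
    ∑ q, ν q * f q.1 = ∑ i, a i * f i := by
  simp only [Fintype.sum_prod_type, ← sum_mul, hrow]

lemma sum_mul_snd {ν : ι × κ → ℝ} {b : κ → ℝ} (hcol : ∀ j, ∑ i, ν (i, j) = b j) (f : κ → ℝ) :
    ∑ q, ν q * f q.2 = ∑ j, b j * f j := by
  simp only [Fintype.sum_prod_type_right, ← sum_mul, hcol]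

lemma exists_reindex_support (ν : ι → ℝ) :
    ∃ q : Fin #{p | ν p ≠ 0} → ι, (∀ t, ν (q t) ≠ 0) ∧
      ∀ g : ι → ℝ, ∑ t, ν (q t) * g (q t) = ∑ p, ν p * g p := by
  set s : Finset ι := {p | ν p ≠ 0}
  refine ⟨fun t => s.equivFin.symm t, fun t => (mem_filter.mp (s.equivFin.symm t).2).2,
    fun g => ?_⟩
  rw [Equiv.sum_comp s.equivFin.symm (fun p => ν p * g p), sum_coe_sort s fun p => ν p * g p]
  exact sum_subset (subset_univ s) fun p _ hp => by simp_all [s]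

omit [Fintype V] [DecidableEq V] in
lemma phi2_eq_sum_mul {k : ℕ} (lam : Fin k → ℝ) (F : Fin k → Sym2 V → ℕ) (e : Sym2 V) :
    phi2 lam F e = ∑ t, lam t * if F t e = 2 then 1 else 0 := by
  simp [phi2, sum_filter]

variable {x : Sym2 V → ℝ} {U : Finset V} {FU : ι → Sym2 (Contracted U) → ℕ}
  {FW : κ → Sym2 (Contracted Uᶜ) → ℕ} {lamU : ι → ℝ} {lamW : κ → ℝ} {ν : ι × κ → ℝ}

lemma sum_mul_glue (hdiag : ∀ e : Sym2 V, e.IsDiag → x e = 0)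
    (hnn : ∀ e : Sym2 V, 0 ≤ x e) (hdisj : HasDisjointCutEdges x U)
    (hrU : ∀ d, contractPoint x U d = ∑ i, lamU i * (FU i d : ℝ))
    (hrW : ∀ d, contractPoint x Uᶜ d = ∑ j, lamW j * (FW j d : ℝ))
    (hrow : ∀ i, ∑ j, ν (i, j) = lamU i) (hcol : ∀ j, ∑ i, ν (i, j) = lamW j) (e : Sym2 V) :
    ∑ q, ν q * (glue x U (FU q.1) (FW q.2) e : ℝ) = x e := by
  by_cases hpos : 0 < x e
  swap
  · simp [glue, le_antisymm (not_lt.mp hpos) (hnn e)]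
  by_cases hU : ∃ w, w ∈ e ∧ w ∈ U
  · obtain ⟨u, hue, hu⟩ := hU
    have hglue : ∀ q : ι × κ, glue x U (FU q.1) (FW q.2) e = FU q.1 (Sym2.map (contractMap U) e) :=
      fun q => liftsAt_glue_left e hpos ⟨u, hue, hu⟩
    simp_rw [hglue]
    rw [sum_mul_fst hrow (fun i => (FU i (Sym2.map (contractMap U) e) : ℝ)), ← hrU,
      contractPoint_map_of_pos hdiag hnn hdisj hu hue hpos]
  · obtain ⟨u, hue⟩ : ∃ u, u ∈ e := ⟨_, Sym2.out_fst_mem e⟩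
    have hu : u ∈ Uᶜ := mem_compl.mpr fun h => hU ⟨u, hue, h⟩
    have hglue : ∀ q : ι × κ,
        glue x U (FU q.1) (FW q.2) e = FW q.2 (Sym2.map (contractMap Uᶜ) e) :=
      fun q => by rw [glue, if_pos hpos, if_neg hU]
    simp_rw [hglue]
    rw [sum_mul_snd hcol (fun j => (FW j (Sym2.map (contractMap Uᶜ) e) : ℝ)), ← hrW,
      contractPoint_map_of_pos hdiag hnn hdisj.compl hu hue hpos]

lemma sum_mul_glue_eq_two_left (hrow : ∀ i, ∑ j, ν (i, j) = lamU i) {e : Sym2 V}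
    (hpos : 0 < x e) (hU : ∃ w, w ∈ e ∧ w ∈ U) :
    ∑ q, ν q * (if glue x U (FU q.1) (FW q.2) e = 2 then 1 else 0 : ℝ) =
      ∑ i, lamU i * if FU i (Sym2.map (contractMap U) e) = 2 then 1 else 0 := by
  simp_rw [liftsAt_glue_left e hpos hU]
  exact sum_mul_fst hrow fun i => if FU i (Sym2.map (contractMap U) e) = 2 then 1 else 0

lemma sum_mul_glue_eq_two_right (hcol : ∀ j, ∑ i, ν (i, j) = lamW j)
    (hagree : ∀ q, ν q ≠ 0 → AgreeOnCut x U (FU q.1) (FW q.2)) {e : Sym2 V}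
    (hpos : 0 < x e) (hW : ∃ w, w ∈ e ∧ w ∉ U) :
    ∑ q, ν q * (if glue x U (FU q.1) (FW q.2) e = 2 then 1 else 0 : ℝ) =
      ∑ j, lamW j * if FW j (Sym2.map (contractMap Uᶜ) e) = 2 then 1 else 0 := by
  obtain ⟨w, hwe, hw⟩ := hW
  rw [← sum_mul_snd hcol]
  refine Fintype.sum_congr _ _ fun q => ?_
  by_cases hq : ν q = 0
  · simp [hq]
  · rw [liftsAt_glue_right (hagree q hq) e hpos ⟨w, hwe, mem_compl.mpr hw⟩]

end Combination

theorem statement9_general (n : ℕ) (θ : ℝ) (x : Sym2 (Fin n) → ℝ)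
    (hx : IsCyclic θ x)
    (U : Finset (Fin n)) (hcrit : IsCriticalCut x U)
    (c1 c2 c3 : Sym2 (Fin n))
    (hcut : cutEdges x U = {c1, c2, c3})
    (kU kW : ℕ)
    (FU : Fin kU → Sym2 (Contracted U) → ℕ) (lamU : Fin kU → ℝ)
    (FW : Fin kW → Sym2 (Contracted Uᶜ) → ℕ) (lamW : Fin kW → ℝ)
    (htU : ∀ i, IsTourSupp (contractPoint x U) (FU i))
    (hhU : ∀ i, Handpicked (contractPoint x U) (FU i))
    (hlU : ∀ i, 0 ≤ lamU i) (hsU : ∑ i, lamU i = 1)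
    (hrU : ∀ d : Sym2 (Contracted U), contractPoint x U d = ∑ i, lamU i * (FU i d : ℝ))
    (htW : ∀ j, IsTourSupp (contractPoint x Uᶜ) (FW j))
    (hhW : ∀ j, Handpicked (contractPoint x Uᶜ) (FW j))
    (hlW : ∀ j, 0 ≤ lamW j)
    (hrW : ∀ d : Sym2 (Contracted Uᶜ), contractPoint x Uᶜ d = ∑ j, lamW j * (FW j d : ℝ))
    (hprofiles : ∀ p : ℕ × ℕ × ℕ,
      patFreq lamU FU (Sym2.map (contractMap U) c1) (Sym2.map (contractMap U) c2)
          (Sym2.map (contractMap U) c3) p =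
        patFreq lamW FW (Sym2.map (contractMap Uᶜ) c1) (Sym2.map (contractMap Uᶜ) c2)
          (Sym2.map (contractMap Uᶜ) c3) p)
    (hconnU : ∀ i,
      ((supportGraph (FU i)).induce {w : Contracted U | w ≠ none}).Connected) :
    ∃ (k : ℕ) (F : Fin k → Sym2 (Fin n) → ℕ) (lam : Fin k → ℝ),
      (∀ i, IsTourSupp x (F i)) ∧ (∀ i, Handpicked x (F i)) ∧
      (∀ i, 0 ≤ lam i) ∧ (∑ i, lam i = 1) ∧
      (∀ e : Sym2 (Fin n), x e = ∑ i, lam i * (F i e : ℝ)) ∧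
      (∀ e : Sym2 (Fin n), 0 < x e → (∃ w, w ∈ e ∧ w ∈ U) →
        phi2 lam F e = phi2 lamU FU (Sym2.map (contractMap U) e)) ∧
      (∀ e : Sym2 (Fin n), 0 < x e → (∃ w, w ∈ e ∧ w ∉ U) →
        phi2 lam F e = phi2 lamW FW (Sym2.map (contractMap Uᶜ) e)) ∧
      k ≤ kU + kW := by
  obtain ⟨hdiag, hnn, -⟩ := hx.2.2.1
  have hdisj : HasDisjointCutEdges x U := hcrit.2.2.2.2
  obtain ⟨ν, hν, hcard⟩ := exists_coupling
    (fun i => (FU i (Sym2.map (contractMap U) c1), FU i (Sym2.map (contractMap U) c2),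
      FU i (Sym2.map (contractMap U) c3)))
    (fun j => (FW j (Sym2.map (contractMap Uᶜ) c1), FW j (Sym2.map (contractMap Uᶜ) c2),
      FW j (Sym2.map (contractMap Uᶜ) c3))) lamU lamW hlU hlW hprofiles
  have hagree : ∀ q, ν q ≠ 0 → AgreeOnCut x U (FU q.1) (FW q.2) := fun q hq =>
    agreeOnCut_of_cutEdges_eq hcut (hν.compat q hq)
  obtain ⟨q, hq, hsum⟩ := exists_reindex_support ν
  refine ⟨_, fun t => glue x U (FU (q t).1) (FW (q t).2), fun t => ν (q t),
    fun t => isTourSupp_glue hdiag hnn hdisj (htU _) (htW _) (hagree _ (hq t)) (hconnU _),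
    fun t => handpicked_glue hdiag hnn hdisj (hhU _) (hhW _) (hagree _ (hq t)),
    fun t => hν.nonneg _, ?_, fun e => ?_, fun e hpos hU => ?_, fun e hpos hW => ?_, ?_⟩
  · simpa [hsU] using (hsum 1).trans (sum_mul_fst hν.sum_fst 1)
  · rw [hsum fun p => (glue x U (FU p.1) (FW p.2) e : ℝ),
      sum_mul_glue hdiag hnn hdisj hrU hrW hν.sum_fst hν.sum_snd]
  · rw [phi2_eq_sum_mul, phi2_eq_sum_mul,
      hsum fun p => if glue x U (FU p.1) (FW p.2) e = 2 then 1 else 0,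
      sum_mul_glue_eq_two_left hν.sum_fst hpos hU]
  · rw [phi2_eq_sum_mul, phi2_eq_sum_mul,
      hsum fun p => if glue x U (FU p.1) (FW p.2) e = 2 then 1 else 0,
      sum_mul_glue_eq_two_right hν.sum_snd hagree hpos hW]
  · simpa using hcard.trans (add_le_add (Finset.card_le_univ _) (Finset.card_le_univ _))

/-- Observation `gluenow`. Gluing convex combinations of handpicked tours of
`G_x^U` and `G_x^{Ū}` over a critical cut `U` (with matching pattern profiles at the
pseudovertices and the connectivity condition) gives a convex combination of handpicked tours of
`G_x` preserving the doubled-edge frequencies, with at most `|𝓕^U| + |𝓕^{Ū}|` tours. -/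
theorem statement9 (n : ℕ) (hn : 3 ≤ n) (θ : ℝ) (x : Sym2 (Fin n) → ℝ)
    (hx : IsCyclic θ x) (hcubic : ∀ v : Fin n, suppDeg x v = 3)
    (U : Finset (Fin n)) (hcrit : IsCriticalCut x U)
    (c1 c2 c3 : Sym2 (Fin n))
    (hcut : cutEdges x U = {c1, c2, c3})
    (h12 : c1 ≠ c2) (h13 : c1 ≠ c3) (h23 : c2 ≠ c3) (hc1 : x c1 = 1)
    (kU kW : ℕ)
    (FU : Fin kU → Sym2 (Contracted U) → ℕ) (lamU : Fin kU → ℝ)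
    (FW : Fin kW → Sym2 (Contracted Uᶜ) → ℕ) (lamW : Fin kW → ℝ)
    (htU : ∀ i, IsTourSupp (contractPoint x U) (FU i))
    (hhU : ∀ i, Handpicked (contractPoint x U) (FU i))
    (hlU : ∀ i, 0 ≤ lamU i) (hsU : ∑ i, lamU i = 1)
    (hrU : ∀ d : Sym2 (Contracted U), contractPoint x U d = ∑ i, lamU i * (FU i d : ℝ))
    (htW : ∀ j, IsTourSupp (contractPoint x Uᶜ) (FW j))
    (hhW : ∀ j, Handpicked (contractPoint x Uᶜ) (FW j))
    (hlW : ∀ j, 0 ≤ lamW j) (hsW : ∑ j, lamW j = 1)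
    (hrW : ∀ d : Sym2 (Contracted Uᶜ), contractPoint x Uᶜ d = ∑ j, lamW j * (FW j d : ℝ))
    (hprofiles : ∀ p : ℕ × ℕ × ℕ,
      patFreq lamU FU (Sym2.map (contractMap U) c1) (Sym2.map (contractMap U) c2)
          (Sym2.map (contractMap U) c3) p =
        patFreq lamW FW (Sym2.map (contractMap Uᶜ) c1) (Sym2.map (contractMap Uᶜ) c2)
          (Sym2.map (contractMap Uᶜ) c3) p)
    (hconnU : ∀ i,
      ((supportGraph (FU i)).induce {w : Contracted U | w ≠ none}).Connected) :
    ∃ (k : ℕ) (F : Fin k → Sym2 (Fin n) → ℕ) (lam : Fin k → ℝ),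
      (∀ i, IsTourSupp x (F i)) ∧ (∀ i, Handpicked x (F i)) ∧
      (∀ i, 0 ≤ lam i) ∧ (∑ i, lam i = 1) ∧
      (∀ e : Sym2 (Fin n), x e = ∑ i, lam i * (F i e : ℝ)) ∧
      (∀ e : Sym2 (Fin n), 0 < x e → (∃ w, w ∈ e ∧ w ∈ U) →
        phi2 lam F e = phi2 lamU FU (Sym2.map (contractMap U) e)) ∧
      (∀ e : Sym2 (Fin n), 0 < x e → (∃ w, w ∈ e ∧ w ∉ U) →
        phi2 lam F e = phi2 lamW FW (Sym2.map (contractMap Uᶜ) e)) ∧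
      k ≤ kU + kW :=
  statement9_general n θ x hx U hcrit c1 c2 c3 hcut kU kW FU lamU FW lamW htU hhU hlU hsU hrU htW
    hhW hlW hrW hprofiles hconnU

end TSPPaper
end
end

section
/- Let G = (V, E) be a graph, let O ⊆ V with |O| even, and let z ∈ O-JOIN(G) satisfy z(δ(u)) ≤ 1 for all u ∈ V. Then z can be written as a convex combination of O-joins of G in which every O-join J satisfies |J ∩ δ(u)| = 1 for every u ∈ O. -/
open scoped Classical

noncomputable section

/-! For `u ∈ O` every `O`-join has odd, hence positive, degree at `u`, so
`z(δ(u)) = ∑ λᵢ |Jᵢ ∩ δ(u)| ≥ ∑ λᵢ = 1`. The hypothesis `z(δ(u)) ≤ 1` forces equality, so every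
join of positive weight meets `δ(u)` exactly once; the joins of weight zero can be replaced by any
join of positive weight without changing the combination. -/

namespace TSPPaper

variable {V : Type*} [DecidableEq V]

theorem edgeDeg_eq_card_filter_mk_mem [Fintype V] {J : Finset (Sym2 V)}
    (hJ : ∀ e ∈ J, ¬ e.IsDiag) (u : V) :
    edgeDeg J u = ((Finset.univ.erase u).filter fun w => s(u, w) ∈ J).card := by
  symm
  apply Finset.card_bij (fun w _ => s(u, w))
  · intro w hw
    rw [Finset.mem_filter] at hw ⊢
    exact ⟨hw.2, Sym2.mem_mk_left u w⟩
  · intro w₁ _ w₂ _ h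
    exact Sym2.congr_right.mp h
  · intro e he
    rw [Finset.mem_filter] at he
    obtain ⟨heJ, hue⟩ := he
    refine ⟨Sym2.Mem.other' hue, ?_, Sym2.other_spec' hue⟩
    rw [Finset.mem_filter, Finset.mem_erase, Sym2.other_spec' hue]
    refine ⟨⟨fun h => ?_, Finset.mem_univ _⟩, heJ⟩
    rw [← Sym2.other_eq_other'] at h
    exact Sym2.other_ne (hJ e heJ) hue h

theorem IsOJoinOfGraph.one_le_edgeDeg {G : SimpleGraph V} {O : Finset V} {J : Finset (Sym2 V)}
    (hJ : IsOJoinOfGraph G O J) {u : V} (hu : u ∈ O) : 1 ≤ edgeDeg J u :=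
  ((hJ.2 u).mpr hu).pos

theorem sum_incident_eq_sum_mul_edgeDeg [Fintype V] {ι : Type*} [Fintype ι] {G : SimpleGraph V}
    {J : ι → Finset (Sym2 V)} (hJ : ∀ i, ∀ e ∈ J i, e ∈ G.edgeSet) (lam : ι → ℝ) (u : V) :
    ∑ w ∈ Finset.univ.erase u, ∑ i, lam i * (if s(u, w) ∈ J i then (1 : ℝ) else 0) =
      ∑ i, lam i * (edgeDeg (J i) u : ℝ) := by
  rw [Finset.sum_comm]
  refine Finset.sum_congr rfl fun i _ => ?_
  rw [← Finset.mul_sum, Finset.sum_boole,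
    edgeDeg_eq_card_filter_mk_mem fun e he => G.not_isDiag_of_mem_edgeSet (hJ i e he)]

theorem eq_one_of_sum_mul_le_one {ι : Type*} [Fintype ι] {lam : ι → ℝ} {d : ι → ℕ}
    (hlam : ∀ i, 0 ≤ lam i) (hsum : ∑ i, lam i = 1) (hd : ∀ i, 1 ≤ d i)
    (hle : ∑ i, lam i * (d i : ℝ) ≤ 1) {i : ι} (hi : lam i ≠ 0) : d i = 1 := by
  by_contra hne
  have hexcess : ∀ j ∈ Finset.univ, 0 ≤ lam j * ((d j : ℝ) - 1) := fun j _ =>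
    mul_nonneg (hlam j) (sub_nonneg.mpr (by exact_mod_cast hd j))
  have hpos : 0 < lam i * ((d i : ℝ) - 1) := by
    have : (2 : ℝ) ≤ d i := by exact_mod_cast (show 2 ≤ d i by have := hd i; omega)
    exact mul_pos ((hlam i).lt_of_ne' hi) (by linarith)
  have htotal : ∑ j, lam j * ((d j : ℝ) - 1) = ∑ j, lam j * (d j : ℝ) - 1 := by
    simp only [mul_sub, mul_one, Finset.sum_sub_distrib, hsum]
  linarith [Finset.single_le_sum hexcess (Finset.mem_univ i)]

theorem sum_mul_ite_weight_eq_zero {ι : Type*} [Fintype ι] (lam f g : ι → ℝ) :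
    ∑ i, lam i * (if lam i = 0 then g i else f i) = ∑ i, lam i * f i :=
  Finset.sum_congr rfl fun i _ => by by_cases h : lam i = 0 <;> simp [h]

theorem statement16_general {V : Type*} [Fintype V] [DecidableEq V]
    (G : SimpleGraph V) (O : Finset V)
    (z : Sym2 V → ℝ)
    (hz : ∃ (k : ℕ) (J : Fin k → Finset (Sym2 V)) (lam : Fin k → ℝ),
      (∀ i, IsOJoinOfGraph G O (J i)) ∧ (∀ i, 0 ≤ lam i) ∧ (∑ i, lam i = 1) ∧
      (∀ e : Sym2 V, z e = ∑ i, lam i * (if e ∈ J i then (1 : ℝ) else 0)))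
    (hzdeg : ∀ u : V, (∑ w ∈ Finset.univ.erase u, z s(u, w)) ≤ 1) :
    ∃ (k : ℕ) (J : Fin k → Finset (Sym2 V)) (lam : Fin k → ℝ),
      (∀ i, IsOJoinOfGraph G O (J i)) ∧ (∀ i, 0 ≤ lam i) ∧ (∑ i, lam i = 1) ∧
      (∀ e : Sym2 V, z e = ∑ i, lam i * (if e ∈ J i then (1 : ℝ) else 0)) ∧
      (∀ i, ∀ u ∈ O, ((J i).filter fun e => u ∈ e).card = 1) := by
  obtain ⟨k, J, lam, hJ, hlam, hsum, hzJ⟩ := hz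
  have hdeg_one : ∀ i, lam i ≠ 0 → ∀ u ∈ O, edgeDeg (J i) u = 1 := by
    intro i hi u hu
    refine eq_one_of_sum_mul_le_one hlam hsum (fun j => (hJ j).one_le_edgeDeg hu) ?_ hi
    have := hzdeg u
    simp only [hzJ] at this
    rwa [sum_incident_eq_sum_mul_edgeDeg (fun i => (hJ i).1)] at this
  obtain ⟨i₀, -, hi₀⟩ := Finset.exists_ne_zero_of_sum_ne_zero (hsum ▸ one_ne_zero)
  refine ⟨k, fun i => if lam i = 0 then J i₀ else J i, lam, fun i => ?_, hlam, hsum,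
    fun e => ?_, fun i u hu => ?_⟩
  · dsimp only
    split_ifs
    exacts [hJ i₀, hJ i]
  · rw [hzJ e, ← sum_mul_ite_weight_eq_zero lam _ fun _ => if e ∈ J i₀ then 1 else 0]
    simp only [apply_ite (fun J : Finset (Sym2 V) => if e ∈ J then (1 : ℝ) else 0)]
  · dsimp only
    split_ifs with h
    exacts [hdeg_one i₀ hi₀ u hu, hdeg_one i h u hu]

/-- Observation `humbleobservation`. If `z` lies in the `O`-join polytope of
`G` and `z(δ(u)) ≤ 1` for every vertex `u`, then `z` is a convex combination of `O`-joins each of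
which uses exactly one edge at every vertex of `O`. -/
theorem statement16 {V : Type*} [Fintype V] [DecidableEq V]
    (G : SimpleGraph V) (O : Finset V) (hO : Even O.card)
    (z : Sym2 V → ℝ)
    (hz : ∃ (k : ℕ) (J : Fin k → Finset (Sym2 V)) (lam : Fin k → ℝ),
      (∀ i, IsOJoinOfGraph G O (J i)) ∧ (∀ i, 0 ≤ lam i) ∧ (∑ i, lam i = 1) ∧
      (∀ e : Sym2 V, z e = ∑ i, lam i * (if e ∈ J i then (1 : ℝ) else 0)))
    (hzdeg : ∀ u : V, (∑ w ∈ Finset.univ.erase u, z s(u, w)) ≤ 1) :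
    ∃ (k : ℕ) (J : Fin k → Finset (Sym2 V)) (lam : Fin k → ℝ),
      (∀ i, IsOJoinOfGraph G O (J i)) ∧ (∀ i, 0 ≤ lam i) ∧ (∑ i, lam i = 1) ∧
      (∀ e : Sym2 V, z e = ∑ i, lam i * (if e ∈ J i then (1 : ℝ) else 0)) ∧
      (∀ i, ∀ u ∈ O, ((J i).filter fun e => u ∈ e).card = 1) :=
  statement16_general G O z hz hzdeg

end TSPPaper
end
end

section
/- Let x ∈ SUBT(K_n) be such that its support graph G_x is 3-edge-connected and cubic, and let 𝒞 be any 2-factor of G_x. Define y ∈ ℝ^{E_n} by y_e = 1/2 for e ∈ 𝒞, y_e = 1 for e ∈ E_x∖𝒞, and y_e = 0 otherwise. Then y ∈ SUBT(K_n). -/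
open scoped Classical

noncomputable section

namespace TSPPaper

variable {V : Type*} [Fintype V] [DecidableEq V]

/-! A 2-factor `C` meets every cut in an even number of edges. If the cut `δ(U)` of the cubic,
3-edge-connected support graph contains `c` edges of `C` and `d` other support edges, then
`y(δ(U)) = c / 2 + d` with `c` even and `c + d ≥ 3`, which forces `y(δ(U)) ≥ 2`. At a single vertex
`c = 2` and `d = 1`, so `y(δ(v)) = 2`. -/

lemma mem_crossEdges {U : Finset V} {e : Sym2 V} :
    e ∈ crossEdges U ↔ ∃ u v : V, e = s(u, v) ∧ u ∈ U ∧ v ∉ U := by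
  simp [crossEdges]

lemma mk_mem_crossEdges_iff {U : Finset V} {a b : V} :
    s(a, b) ∈ crossEdges U ↔ (a ∈ U ↔ b ∉ U) := by
  rw [mem_crossEdges]
  constructor
  · rintro ⟨u, v, h, hu, hv⟩
    rcases Sym2.eq_iff.1 h with ⟨rfl, rfl⟩ | ⟨rfl, rfl⟩ <;> tauto
  · intro h
    by_cases ha : a ∈ U
    · exact ⟨a, b, rfl, ha, h.1 ha⟩
    · exact ⟨b, a, Sym2.eq_swap, by tauto, ha⟩

lemma mem_crossEdges_singleton {v : V} {e : Sym2 V} (he : ¬ e.IsDiag) :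
    e ∈ crossEdges {v} ↔ v ∈ e := by
  induction e using Sym2.ind with
  | _ a b =>
    rw [Sym2.mk_isDiag_iff] at he
    rw [mk_mem_crossEdges_iff, Sym2.mem_iff, Finset.mem_singleton, Finset.mem_singleton]
    grind

lemma cutSum_eq_sum_crossEdges (z : Sym2 V → ℝ) (U : Finset V) :
    cutSum z U = ∑ e ∈ crossEdges U, z e := by
  rw [cutSum, ← Finset.sum_product']
  refine Finset.sum_bij (fun p _ => s(p.1, p.2)) ?_ ?_ ?_ fun _ _ => rfl
  · rintro ⟨u, v⟩ hp
    rw [Finset.mem_product, Finset.mem_compl] at hp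
    exact mem_crossEdges.2 ⟨u, v, rfl, hp⟩
  · rintro ⟨u, v⟩ hp ⟨u', v'⟩ hp' h
    rw [Finset.mem_product, Finset.mem_compl] at hp hp'
    rcases Sym2.eq_iff.1 h with ⟨rfl, rfl⟩ | ⟨rfl, rfl⟩
    · rfl
    · exact absurd hp.1 hp'.2
  · intro e he
    obtain ⟨u, v, rfl, hu, hv⟩ := mem_crossEdges.1 he
    exact ⟨(u, v), Finset.mem_product.2 ⟨hu, Finset.mem_compl.2 hv⟩, rfl⟩

lemma sum_crossEdges_eq_sum_cutEdges {x z : Sym2 V → ℝ} (hx : ∀ e, 0 ≤ x e)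
    (hz : ∀ e, x e = 0 → z e = 0) (U : Finset V) :
    ∑ e ∈ crossEdges U, z e = ∑ e ∈ cutEdges x U, z e :=
  (Finset.sum_filter_of_ne fun e _ hze =>
    lt_of_le_of_ne (hx e) fun h => hze (hz e h.symm)).symm

lemma filter_mem_cutEdges_eq {x : Sym2 V → ℝ} {C : Finset (Sym2 V)} (hC : ∀ e ∈ C, 0 < x e)
    (U : Finset V) : (cutEdges x U).filter (· ∈ C) = C.filter (· ∈ crossEdges U) := by
  ext e
  simp only [cutEdges, Finset.mem_filter]
  exact ⟨fun h => ⟨h.2, h.1.1⟩, fun h => ⟨⟨h.2, hC e h.1⟩, h.1⟩⟩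

lemma cutEdges_singleton {x : Sym2 V → ℝ} (hx : ∀ e, e.IsDiag → x e = 0) (v : V) :
    cutEdges x {v} = Finset.univ.filter fun e => 0 < x e ∧ v ∈ e := by
  ext e
  simp only [cutEdges, Finset.mem_filter, Finset.mem_univ, true_and]
  constructor
  · rintro ⟨hv, hxe⟩
    exact ⟨hxe, (mem_crossEdges_singleton fun hd => hxe.ne' (hx e hd)).1 hv⟩
  · rintro ⟨hxe, hv⟩
    exact ⟨(mem_crossEdges_singleton fun hd => hxe.ne' (hx e hd)).2 hv, hxe⟩

lemma filter_crossEdges_singleton {C : Finset (Sym2 V)} (hC : ∀ e ∈ C, ¬ e.IsDiag) (v : V) :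
    C.filter (· ∈ crossEdges {v}) = C.filter (v ∈ ·) :=
  Finset.filter_congr fun e he => mem_crossEdges_singleton (hC e he)

lemma natCast_card_filter_mem_eq_ite {U : Finset V} {e : Sym2 V} (he : ¬ e.IsDiag) :
    ((U.filter (· ∈ e)).card : ZMod 2) = if e ∈ crossEdges U then 1 else 0 := by
  induction e using Sym2.ind with
  | _ a b =>
    rw [Sym2.mk_isDiag_iff] at he
    have hfilter : U.filter (· ∈ s(a, b)) = U.filter (· = a) ∪ U.filter (· = b) := by
      simp only [Sym2.mem_iff, Finset.filter_or]
    rw [hfilter, Finset.card_union_of_disjoint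
      (Finset.disjoint_filter.2 fun _ _ h h' => he (h.symm.trans h')),
      Finset.filter_eq', Finset.filter_eq']
    simp only [mk_mem_crossEdges_iff]
    by_cases ha : a ∈ U <;> by_cases hb : b ∈ U <;> simp [ha, hb]
    decide

theorem even_card_filter_crossEdges {C : Finset (Sym2 V)} (hC : ∀ e ∈ C, ¬ e.IsDiag)
    (hdeg : ∀ v, Even (edgeDeg C v)) (U : Finset V) :
    Even (C.filter (· ∈ crossEdges U)).card := by
  have hdouble : ∑ v ∈ U, edgeDeg C v = ∑ e ∈ C, (U.filter (· ∈ e)).card := by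
    simp only [edgeDeg, Finset.card_filter]
    exact Finset.sum_comm
  rw [← ZMod.natCast_eq_zero_iff_even, Finset.card_filter, Nat.cast_sum]
  calc ∑ e ∈ C, ((if e ∈ crossEdges U then 1 else 0 : ℕ) : ZMod 2)
      = ∑ e ∈ C, ((U.filter (· ∈ e)).card : ZMod 2) :=
        Finset.sum_congr rfl fun e he => by
          rw [natCast_card_filter_mem_eq_ite (hC e he), Nat.cast_ite, Nat.cast_one, Nat.cast_zero]
    _ = ∑ v ∈ U, (edgeDeg C v : ZMod 2) := by rw [← Nat.cast_sum, ← hdouble, Nat.cast_sum]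
    _ = 0 := Finset.sum_eq_zero fun v _ => ZMod.natCast_eq_zero_iff_even.2 (hdeg v)

lemma nonneg_and_le_one_of_half_on_factor {α : Type*} {x y : α → ℝ} {C : Finset α}
    (hx : ∀ e, 0 ≤ x e) (hyC : ∀ e ∈ C, y e = 1 / 2) (hyE : ∀ e, 0 < x e → e ∉ C → y e = 1)
    (hy0 : ∀ e, x e = 0 → y e = 0) (e : α) :
    0 ≤ y e ∧ y e ≤ 1 := by
  rcases (hx e).eq_or_lt with h | h
  · rw [hy0 e h.symm]
    norm_num
  by_cases hc : e ∈ C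
  · rw [hyC e hc]
    norm_num
  · rw [hyE e h hc]
    norm_num

lemma cutSum_eq_of_half_on_factor {x y : Sym2 V → ℝ} {C : Finset (Sym2 V)} (hx : ∀ e, 0 ≤ x e)
    (hyC : ∀ e ∈ C, y e = 1 / 2) (hyE : ∀ e, 0 < x e → e ∉ C → y e = 1)
    (hy0 : ∀ e, x e = 0 → y e = 0) (U : Finset V) :
    cutSum y U = ((cutEdges x U).filter (· ∈ C)).card / 2
      + ((cutEdges x U).filter (· ∉ C)).card := by
  have hin : ∀ e ∈ (cutEdges x U).filter (· ∈ C), y e = 1 / 2 := fun e he =>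
    hyC e (Finset.mem_filter.1 he).2
  have hout : ∀ e ∈ (cutEdges x U).filter (· ∉ C), y e = 1 := fun e he => by
    simp only [cutEdges, Finset.mem_filter] at he
    exact hyE e he.1.2 he.2
  rw [cutSum_eq_sum_crossEdges, sum_crossEdges_eq_sum_cutEdges hx hy0,
    ← Finset.sum_filter_add_sum_filter_not _ (· ∈ C), Finset.sum_congr rfl hin,
    Finset.sum_congr rfl hout]
  simp only [Finset.sum_const, nsmul_eq_mul, mul_one]
  ring

lemma two_le_half_add_of_even {c d : ℕ} (hc : Even c) (hcd : 3 ≤ c + d) :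
    (2 : ℝ) ≤ c / 2 + d := by
  have h : 4 ≤ c + 2 * d := by
    obtain ⟨k, rfl⟩ := hc
    omega
  have h' : (4 : ℝ) ≤ c + 2 * d := by exact_mod_cast h
  linarith

theorem statement17_general (n : ℕ) (x : Sym2 (Fin n) → ℝ) (hx : inSUBT x)
    (h3ec : ∀ U : Finset (Fin n), U.Nonempty → U ≠ Finset.univ → 3 ≤ (cutEdges x U).card)
    (hcubic : ∀ v : Fin n, suppDeg x v = 3)
    (C : Finset (Sym2 (Fin n))) (hC : ∀ e ∈ C, 0 < x e)
    (h2f : ∀ v : Fin n, edgeDeg C v = 2)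
    (y : Sym2 (Fin n) → ℝ)
    (hyC : ∀ e ∈ C, y e = 1 / 2)
    (hyE : ∀ e : Sym2 (Fin n), 0 < x e → e ∉ C → y e = 1)
    (hy0 : ∀ e : Sym2 (Fin n), x e = 0 → y e = 0) :
    inSUBT y := by
  obtain ⟨hdiag, hnn, -, -, -⟩ := hx
  have hCdiag : ∀ e ∈ C, ¬ e.IsDiag := fun e he hd => (hC e he).ne' (hdiag e hd)
  have hbounds := nonneg_and_le_one_of_half_on_factor hnn hyC hyE hy0
  have hcut := cutSum_eq_of_half_on_factor hnn hyC hyE hy0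
  have hsplit := fun U : Finset (Fin n) =>
    Finset.card_filter_add_card_filter_not (s := cutEdges x U) (p := (· ∈ C))
  refine ⟨fun e he => hy0 e (hdiag e he), fun e => (hbounds e).1, fun e => (hbounds e).2,
    fun v => ?_, fun U hU hUuniv => ?_⟩
  · have hin : ((cutEdges x {v}).filter (· ∈ C)).card = 2 := by
      rw [filter_mem_cutEdges_eq hC, filter_crossEdges_singleton hCdiag]
      exact h2f v
    have hall : (cutEdges x {v}).card = 3 := by
      rw [cutEdges_singleton hdiag]
      exact hcubic v
    have hout : ((cutEdges x {v}).filter (· ∉ C)).card = 1 := by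
      have := hsplit {v}
      omega
    rw [hcut, hin, hout]
    norm_num
  · rw [hcut]
    refine two_le_half_add_of_even ?_ ((hsplit U).symm ▸ h3ec U hU hUuniv)
    rw [filter_mem_cutEdges_eq hC]
    exact even_card_filter_crossEdges hCdiag (fun v => h2f v ▸ even_two) U

/-- Observation `lem:in-subtour`. If `x ∈ SUBT(K_n)` has a 3-edge-connected
cubic support graph and `𝒞` is a 2-factor of `G_x`, then the vector `y` which is `1/2` on `𝒞`,
`1` on `E_x ∖ 𝒞` and `0` elsewhere lies in `SUBT(K_n)`. -/
theorem statement17 (n : ℕ) (hn : 3 ≤ n) (x : Sym2 (Fin n) → ℝ) (hx : inSUBT x)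
    (h3ec : ∀ U : Finset (Fin n), U.Nonempty → U ≠ Finset.univ → 3 ≤ (cutEdges x U).card)
    (hcubic : ∀ v : Fin n, suppDeg x v = 3)
    (C : Finset (Sym2 (Fin n))) (hC : ∀ e ∈ C, 0 < x e)
    (h2f : ∀ v : Fin n, edgeDeg C v = 2)
    (y : Sym2 (Fin n) → ℝ)
    (hyC : ∀ e ∈ C, y e = 1 / 2)
    (hyE : ∀ e : Sym2 (Fin n), 0 < x e → e ∉ C → y e = 1)
    (hy0 : ∀ e : Sym2 (Fin n), x e = 0 → y e = 0) :
    inSUBT y :=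
  statement17_general n x hx h3ec hcubic C hC h2f y hyC hyE hy0

end TSPPaper
end
end
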